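/- The signless displaced GBS polynomial is multiplicative over disjoint unions: DGBS⁺_{G₁ ⊎ G₂}(x, z) = DGBS⁺_{G₁}(x, z) · DGBS⁺_{G₂}(x, z). -/

import Mathlib

open Finset Polynomial

/-- The hafnian of an `n × n` matrix: `(1/((n/2)! 2^(n/2))) ∑_{σ} ∏_j A_{σ(2j), σ(2j+1)}`,
taken to be `0` when `n` is odd and `1` for the empty matrix. -/
noncomputable def haf {F : Type*} [Field F] {n : ℕ} (A : Matrix (Fin n) (Fin n) F) : F :=
  if h : 2 ∣ n then
    (((n / 2).factorial * 2 ^ (n / 2) : ℕ) : F)⁻¹ *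
      ∑ σ : Equiv.Perm (Fin n), ∏ j : Fin (n / 2),
        A (σ ⟨2 * j.1, by have h1 := Nat.div_mul_cancel h; have h2 := j.isLt; omega⟩)
          (σ ⟨2 * j.1 + 1, by have h1 := Nat.div_mul_cancel h; have h2 := j.isLt; omega⟩)
  else 0

/-- The principal submatrix of `A` indexed by the subset `S` of the rows/columns. -/
def subm {F : Type*} {M : ℕ} (A : Matrix (Fin M) (Fin M) F) (S : Finset (Fin M)) :
    Matrix (Fin S.card) (Fin S.card) F :=
  fun i j => A (S.orderEmbOfFin rfl i) (S.orderEmbOfFin rfl j)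

/-- The GBS polynomial `∑_{S ⊆ V} (-1)^{|S|/2} haf(A_S)² x^{M-|S|}`. -/
noncomputable def GBS {F : Type*} [Field F] {M : ℕ} (A : Matrix (Fin M) (Fin M) F) :
    Polynomial F :=
  ∑ S : Finset (Fin M),
    Polynomial.C ((-1 : F) ^ (S.card / 2) * (haf (subm A S)) ^ 2) * Polynomial.X ^ (M - S.card)

/-- The signless GBS polynomial `∑_{S ⊆ V} haf(A_S)² x^{M-|S|}`. -/
noncomputable def GBSplus {F : Type*} [Field F] {M : ℕ} (A : Matrix (Fin M) (Fin M) F) :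
    Polynomial F :=
  ∑ S : Finset (Fin M), Polynomial.C ((haf (subm A S)) ^ 2) * Polynomial.X ^ (M - S.card)

/-- The signless matching polynomial `μ⁺(A, z) = ∑_{T} haf(A_{T,T}) z^{M-|T|}`. -/
noncomputable def muPlus {F : Type*} [Field F] {M : ℕ} (A : Matrix (Fin M) (Fin M) F) :
    Polynomial F :=
  ∑ S : Finset (Fin M), Polynomial.C (haf (subm A S)) * Polynomial.X ^ (M - S.card)

/-- The (signed) matching polynomial `μ(A, z) = ∑_{T} (-1)^{|T|/2} haf(A_{T,T}) z^{M-|T|}`. -/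
noncomputable def matchPoly {F : Type*} [Field F] {M : ℕ} (A : Matrix (Fin M) (Fin M) F) :
    Polynomial F :=
  ∑ S : Finset (Fin M),
    Polynomial.C ((-1 : F) ^ (S.card / 2) * haf (subm A S)) * Polynomial.X ^ (M - S.card)

/-- The adjacency matrix `[[A, xI],[xI, A]]` of the prism `G □ P₂(x)` over the graph
with adjacency matrix `A`. -/
noncomputable def prism {F : Type*} [Field F] {M : ℕ} (A : Matrix (Fin M) (Fin M) F) (x : F) :
    Matrix (Fin (M + M)) (Fin (M + M)) F :=
  Matrix.submatrix (Matrix.fromBlocks A (x • 1) (x • 1) A) finSumFinEquiv.symm finSumFinEquiv.symm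

/-- The adjacency matrix `A₁ ⊕ A₂` of the disjoint union of two graphs. -/
def dsum {F : Type*} [Zero F] {M N : ℕ} (A : Matrix (Fin M) (Fin M) F)
    (B : Matrix (Fin N) (Fin N) F) : Matrix (Fin (M + N)) (Fin (M + N)) F :=
  Matrix.submatrix (Matrix.fromBlocks A 0 0 B) finSumFinEquiv.symm finSumFinEquiv.symm

section Basic

variable {M N : ℕ}

/-- pair positions -/
def q0 {n : ℕ} (j : Fin (n/2)) : Fin n := ⟨2*j.1, by have := j.isLt; omega⟩
def q1 {n : ℕ} (j : Fin (n/2)) : Fin n := ⟨2*j.1+1, by have := j.isLt; omega⟩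

noncomputable def rsum {n : ℕ} (A : Matrix (Fin n) (Fin n) ℝ) : ℝ :=
  ∑ σ : Equiv.Perm (Fin n), ∏ j : Fin (n/2), A (σ (q0 j)) (σ (q1 j))

lemma haf_eq {n : ℕ} (h : 2 ∣ n) (A : Matrix (Fin n) (Fin n) ℝ) :
    haf A = (((n / 2).factorial * 2 ^ (n / 2) : ℕ) : ℝ)⁻¹ * rsum A := by
  rw [haf, dif_pos h]; rfl

lemma haf_odd {n : ℕ} (h : ¬ 2 ∣ n) (A : Matrix (Fin n) (Fin n) ℝ) : haf A = 0 := dif_neg h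

@[simp] lemma dsum_apply_ll (A : Matrix (Fin M) (Fin M) ℝ) (B : Matrix (Fin N) (Fin N) ℝ)
    (i j : Fin M) : dsum A B (Fin.castAdd N i) (Fin.castAdd N j) = A i j := by
  simp [dsum, finSumFinEquiv_symm_apply_castAdd]

@[simp] lemma dsum_apply_rr (A : Matrix (Fin M) (Fin M) ℝ) (B : Matrix (Fin N) (Fin N) ℝ)
    (i j : Fin N) : dsum A B (Fin.natAdd M i) (Fin.natAdd M j) = B i j := by
  simp [dsum, finSumFinEquiv_symm_apply_natAdd]

@[simp] lemma dsum_apply_lr (A : Matrix (Fin M) (Fin M) ℝ) (B : Matrix (Fin N) (Fin N) ℝ)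
    (i : Fin M) (j : Fin N) : dsum A B (Fin.castAdd N i) (Fin.natAdd M j) = 0 := by
  simp [dsum, finSumFinEquiv_symm_apply_castAdd, finSumFinEquiv_symm_apply_natAdd]

@[simp] lemma dsum_apply_rl (A : Matrix (Fin M) (Fin M) ℝ) (B : Matrix (Fin N) (Fin N) ℝ)
    (i : Fin N) (j : Fin M) : dsum A B (Fin.natAdd M i) (Fin.castAdd N j) = 0 := by
  simp [dsum, finSumFinEquiv_symm_apply_castAdd, finSumFinEquiv_symm_apply_natAdd]

lemma eq_castAdd_of_lt (i : Fin (M+N)) (h : i.1 < M) : i = Fin.castAdd N ⟨i.1, h⟩ := rfl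

lemma eq_natAdd_of_le (i : Fin (M+N)) (h : M ≤ i.1) :
    i = Fin.natAdd M ⟨i.1 - M, by have := i.isLt; omega⟩ := by
  apply Fin.ext; simp [Fin.natAdd]; omega

lemma dsum_cross (A : Matrix (Fin M) (Fin M) ℝ) (B : Matrix (Fin N) (Fin N) ℝ)
    (i j : Fin (M+N)) (h : ¬ (i.1 < M ↔ j.1 < M)) : dsum A B i j = 0 := by
  rcases lt_or_ge i.1 M with hi | hi <;> rcases lt_or_ge j.1 M with hj | hj
  · exact absurd (iff_of_true hi hj) h
  · rw [eq_castAdd_of_lt i hi, eq_natAdd_of_le j hj, dsum_apply_lr]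
  · rw [eq_natAdd_of_le i hi, eq_castAdd_of_lt j hj, dsum_apply_rl]
  · exact absurd (iff_of_false (by omega) (by omega)) h

end Basic

section JoinSplit

variable {M N : ℕ}

def jn (S₁ : Finset (Fin M)) (S₂ : Finset (Fin N)) : Finset (Fin (M+N)) :=
  S₁.map (Fin.castAddOrderEmb N).toEmbedding ∪ S₂.map (Fin.natAddOrderEmb M).toEmbedding

def sp1 (S : Finset (Fin (M+N))) : Finset (Fin M) :=
  Finset.univ.filter (fun a => Fin.castAdd N a ∈ S)

def sp2 (S : Finset (Fin (M+N))) : Finset (Fin N) :=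
  Finset.univ.filter (fun b => Fin.natAdd M b ∈ S)

lemma mem_sp1 {S : Finset (Fin (M+N))} {a : Fin M} : a ∈ sp1 S ↔ Fin.castAdd N a ∈ S := by
  simp [sp1]

lemma mem_sp2 {S : Finset (Fin (M+N))} {b : Fin N} : b ∈ sp2 S ↔ Fin.natAdd M b ∈ S := by
  simp [sp2]

lemma mem_jn {S₁ : Finset (Fin M)} {S₂ : Finset (Fin N)} {i : Fin (M+N)} :
    i ∈ jn S₁ S₂ ↔ (∃ a ∈ S₁, Fin.castAdd N a = i) ∨ (∃ b ∈ S₂, Fin.natAdd M b = i) := by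
  simp [jn]
  exact Iff.rfl

lemma card_jn (S₁ : Finset (Fin M)) (S₂ : Finset (Fin N)) :
    (jn S₁ S₂).card = S₁.card + S₂.card := by
  rw [jn, Finset.card_union_of_disjoint, Finset.card_map, Finset.card_map]
  simp only [Finset.disjoint_left, Finset.mem_map]
  rintro x ⟨a, _, rfl⟩ ⟨b, _, hb⟩
  have := congrArg Fin.val hb
  simp [Fin.castAdd, Fin.natAdd, Fin.castLE] at this
  have h3 : ((Fin.castAddOrderEmb N).toEmbedding a).1 = a.1 := rfl
  have h4 := a.isLt
  have h5 : M + b.1 = a.1 := congrArg Fin.val hb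
  omega

lemma jn_sp (S : Finset (Fin (M+N))) : jn (sp1 S) (sp2 S) = S := by
  ext i
  rw [mem_jn]
  constructor
  · rintro (⟨a, ha, rfl⟩ | ⟨b, hb, rfl⟩)
    · exact mem_sp1.1 ha
    · exact mem_sp2.1 hb
  · intro hi
    rcases lt_or_ge i.1 M with h | h
    · exact Or.inl ⟨⟨i.1, h⟩, mem_sp1.2 ((eq_castAdd_of_lt i h) ▸ hi), rfl⟩
    · refine Or.inr ⟨⟨i.1 - M, by have := i.isLt; omega⟩, ?_, ?_⟩
      · rw [mem_sp2]
        have : Fin.natAdd M (⟨i.1 - M, by have := i.isLt; omega⟩ : Fin N) = i := by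
          apply Fin.ext; simp [Fin.natAdd]; omega
        rwa [this]
      · apply Fin.ext; simp [Fin.natAdd]; omega

lemma sp1_jn (S₁ : Finset (Fin M)) (S₂ : Finset (Fin N)) : sp1 (jn S₁ S₂) = S₁ := by
  ext a
  rw [mem_sp1, mem_jn]
  constructor
  · rintro (⟨a', ha', h⟩ | ⟨b, _, h⟩)
    · have hv : (Fin.castAdd N a').1 = (Fin.castAdd N a).1 := congrArg Fin.val h
      have : a' = a := Fin.ext (by simpa using hv)
      rwa [← this]
    · have := congrArg Fin.val h
      simp [Fin.castAdd, Fin.natAdd, Fin.castLE] at this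
      omega
  · intro h; exact Or.inl ⟨a, h, rfl⟩

lemma sp2_jn (S₁ : Finset (Fin M)) (S₂ : Finset (Fin N)) : sp2 (jn S₁ S₂) = S₂ := by
  ext b
  rw [mem_sp2, mem_jn]
  constructor
  · rintro (⟨a, _, h⟩ | ⟨b', hb', h⟩)
    · have := congrArg Fin.val h
      simp [Fin.castAdd, Fin.natAdd, Fin.castLE] at this
      omega
    · have : b' = b := by
        have := congrArg Fin.val h
        simp [Fin.natAdd] at this
        exact Fin.ext this
      rwa [← this]
  · intro h; exact Or.inr ⟨b, h, rfl⟩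

lemma orderEmb_jn (S₁ : Finset (Fin M)) (S₂ : Finset (Fin N)) (i : Fin ((jn S₁ S₂).card)) :
    (jn S₁ S₂).orderEmbOfFin rfl i =
      if h : i.1 < S₁.card then Fin.castAdd N (S₁.orderEmbOfFin rfl ⟨i.1, h⟩)
      else Fin.natAdd M (S₂.orderEmbOfFin rfl
        ⟨i.1 - S₁.card, by have h1 := i.isLt; have h2 := card_jn S₁ S₂; omega⟩) := by
  set f : Fin ((jn S₁ S₂).card) → Fin (M+N) := fun i =>
    if h : i.1 < S₁.card then Fin.castAdd N (S₁.orderEmbOfFin rfl ⟨i.1, h⟩)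
    else Fin.natAdd M (S₂.orderEmbOfFin rfl
      ⟨i.1 - S₁.card, by have h1 := i.isLt; have h2 := card_jn S₁ S₂; omega⟩) with hf
  have hmem : ∀ x, f x ∈ jn S₁ S₂ := by
    intro x
    rw [hf]
    dsimp only
    split
    · exact mem_jn.2 (Or.inl ⟨_, Finset.orderEmbOfFin_mem _ _ _, rfl⟩)
    · exact mem_jn.2 (Or.inr ⟨_, Finset.orderEmbOfFin_mem _ _ _, rfl⟩)
  have hmono : StrictMono f := by
    intro x y hxy
    have hxy' : x.1 < y.1 := hxy
    rw [hf]
    dsimp only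
    split <;> split
    · rename_i hx hy
      have : (⟨x.1, hx⟩ : Fin S₁.card) < ⟨y.1, hy⟩ := hxy'
      exact (S₁.orderEmbOfFin rfl).strictMono this
    · rename_i hx hy
      have h1 : (S₁.orderEmbOfFin rfl ⟨x.1, hx⟩).1 < M := (S₁.orderEmbOfFin rfl _).isLt
      simp only [Fin.lt_def, Fin.coe_castAdd, Fin.coe_natAdd]
      omega
    · rename_i hx hy
      exact absurd hxy' (by omega)
    · rename_i hx hy
      have hlt : (⟨x.1 - S₁.card, by have h1 := x.isLt; have h2 := card_jn S₁ S₂; omega⟩ : Fin S₂.card) < ⟨y.1 - S₁.card, by have h1 := y.isLt; have h2 := card_jn S₁ S₂; omega⟩ := by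
        simp only [Fin.lt_def]; omega
      have := (S₂.orderEmbOfFin rfl).strictMono hlt
      simp only [Fin.lt_def, Fin.coe_natAdd] at this ⊢
      omega
  have := Finset.orderEmbOfFin_unique (rfl : (jn S₁ S₂).card = (jn S₁ S₂).card) hmem hmono
  exact (congrFun this i).symm

end JoinSplit

section Cast

lemma submatrix_finCongr_rfl {n : ℕ} (A : Matrix (Fin n) (Fin n) ℝ) (h : n = n) :
    A.submatrix (finCongr h) (finCongr h) = A := by
  ext i j; simp [Matrix.submatrix_apply]

lemma haf_cast {n n' : ℕ} (h : n' = n) (A : Matrix (Fin n) (Fin n) ℝ) :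
    haf (A.submatrix (finCongr h) (finCongr h)) = haf A := by
  subst h; rw [submatrix_finCongr_rfl]

lemma muPlus_cast {n n' : ℕ} (h : n' = n) (A : Matrix (Fin n) (Fin n) ℝ) :
    muPlus (A.submatrix (finCongr h) (finCongr h)) = muPlus A := by
  subst h; rw [submatrix_finCongr_rfl]

end Cast

section SubmDsum

variable {M N : ℕ}

lemma subm_jn (A : Matrix (Fin M) (Fin M) ℝ) (B : Matrix (Fin N) (Fin N) ℝ)
    (S₁ : Finset (Fin M)) (S₂ : Finset (Fin N)) :
    subm (dsum A B) (jn S₁ S₂) =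
      (dsum (subm A S₁) (subm B S₂)).submatrix
        (finCongr (card_jn S₁ S₂)) (finCongr (card_jn S₁ S₂)) := by
  ext i j
  rw [Matrix.submatrix_apply]
  show dsum A B ((jn S₁ S₂).orderEmbOfFin rfl i) ((jn S₁ S₂).orderEmbOfFin rfl j)
      = dsum (subm A S₁) (subm B S₂) (finCongr (card_jn S₁ S₂) i) (finCongr (card_jn S₁ S₂) j)
  rw [orderEmb_jn, orderEmb_jn]
  have hci : (finCongr (card_jn S₁ S₂) i).1 = i.1 := rfl
  have hcj : (finCongr (card_jn S₁ S₂) j).1 = j.1 := rfl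
  by_cases hi : i.1 < S₁.card <;> by_cases hj : j.1 < S₁.card
  · rw [dif_pos hi, dif_pos hj, dsum_apply_ll,
      eq_castAdd_of_lt (finCongr (card_jn S₁ S₂) i) (by rw [hci]; exact hi),
      eq_castAdd_of_lt (finCongr (card_jn S₁ S₂) j) (by rw [hcj]; exact hj), dsum_apply_ll]
    rfl
  · rw [dif_pos hi, dif_neg hj, dsum_apply_lr,
      eq_castAdd_of_lt (finCongr (card_jn S₁ S₂) i) (by rw [hci]; exact hi),
      eq_natAdd_of_le (finCongr (card_jn S₁ S₂) j) (by rw [hcj]; omega), dsum_apply_lr]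
  · rw [dif_neg hi, dif_pos hj, dsum_apply_rl,
      eq_natAdd_of_le (finCongr (card_jn S₁ S₂) i) (by rw [hci]; omega),
      eq_castAdd_of_lt (finCongr (card_jn S₁ S₂) j) (by rw [hcj]; exact hj), dsum_apply_rl]
  · rw [dif_neg hi, dif_neg hj, dsum_apply_rr,
      eq_natAdd_of_le (finCongr (card_jn S₁ S₂) i) (by rw [hci]; omega),
      eq_natAdd_of_le (finCongr (card_jn S₁ S₂) j) (by rw [hcj]; omega), dsum_apply_rr]
    rfl

end SubmDsum

section Pure

open Equiv

variable {M N : ℕ}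

def pureP {M N : ℕ} (σ : Equiv.Perm (Fin (M+N))) : Prop :=
  ∀ j : Fin ((M+N)/2), ((σ (q0 j)).1 < M ↔ (σ (q1 j)).1 < M)

instance {M N : ℕ} (σ : Equiv.Perm (Fin (M+N))) : Decidable (pureP (M := M) (N := N) σ) := by
  unfold pureP; infer_instance

lemma rsum_dsum_filter (A : Matrix (Fin M) (Fin M) ℝ) (B : Matrix (Fin N) (Fin N) ℝ) :
    rsum (dsum A B) =
      ∑ σ ∈ Finset.univ.filter (fun σ => pureP (M := M) (N := N) σ),
        ∏ j : Fin ((M+N)/2), dsum A B (σ (q0 j)) (σ (q1 j)) := by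
  rw [rsum]
  refine (Finset.sum_filter_of_ne ?_).symm
  intro σ _ hne
  by_contra hnp
  rw [pureP] at hnp
  push_neg at hnp
  obtain ⟨j, hj⟩ := hnp
  exact hne (Finset.prod_eq_zero (Finset.mem_univ j) (dsum_cross A B _ _ (by omega)))

lemma card_filter_pure (h2 : 2 ∣ (M + N)) (σ : Equiv.Perm (Fin (M+N)))
    (hp : pureP (M := M) (N := N) σ) :
    2 * (Finset.univ.filter (fun j : Fin ((M+N)/2) => (σ (q0 j)).1 < M)).card = M := by
  have key : Finset.univ.filter (fun i : Fin (M+N) => (σ i).1 < M) =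
      (Finset.univ.filter (fun j : Fin ((M+N)/2) => (σ (q0 j)).1 < M)).biUnion
        (fun j => {q0 j, q1 j}) := by
    ext i
    simp only [Finset.mem_filter, Finset.mem_univ, true_and, Finset.mem_biUnion,
      Finset.mem_insert, Finset.mem_singleton]
    have hjlt : i.1 / 2 < (M+N)/2 := by have := i.isLt; omega
    set j : Fin ((M+N)/2) := ⟨i.1/2, hjlt⟩ with hj
    have hcase : i = q0 j ∨ i = q1 j := by
      rcases Nat.mod_two_eq_zero_or_one i.1 with h | h
      · exact Or.inl (Fin.ext (by simp [q0, hj]; omega))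
      · exact Or.inr (Fin.ext (by simp [q1, hj]; omega))
    constructor
    · intro hi
      refine ⟨j, ?_, hcase⟩
      rcases hcase with h | h
      · rwa [← h]
      · rw [h] at hi; exact (hp j).2 hi
    · rintro ⟨j', hj', h | h⟩
      · rwa [h]
      · rw [h]; exact (hp j').1 hj'
  have hL : (Finset.univ.filter (fun i : Fin (M+N) => (σ i).1 < M)).card = M := by
    have h1 : (Finset.univ.filter (fun i : Fin (M+N) => (σ i).1 < M)).card =
        (Finset.univ.filter (fun v : Fin (M+N) => v.1 < M)).card := by
      apply Finset.card_bij (fun i _ => σ i)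
      · intro a ha; simp only [Finset.mem_filter, Finset.mem_univ, true_and] at ha ⊢; exact ha
      · intro a _ b _ hab; exact σ.injective hab
      · intro v hv
        refine ⟨σ.symm v, ?_, σ.apply_symm_apply v⟩
        simp only [Finset.mem_filter, Finset.mem_univ, true_and] at hv ⊢
        simpa using hv
    have h2' : Finset.univ.filter (fun v : Fin (M+N) => v.1 < M) =
        Finset.univ.map (Fin.castAddOrderEmb N).toEmbedding := by
      ext v
      simp only [Finset.mem_filter, Finset.mem_univ, true_and, Finset.mem_map]
      constructor
      · intro hv; exact ⟨⟨v.1, hv⟩, Fin.ext rfl⟩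
      · rintro ⟨a, rfl⟩
        exact a.isLt
    rw [h1, h2', Finset.card_map, Finset.card_univ, Fintype.card_fin]
  have hR : ((Finset.univ.filter (fun j : Fin ((M+N)/2) => (σ (q0 j)).1 < M)).biUnion
      (fun j => ({q0 j, q1 j} : Finset (Fin (M+N))))).card =
      2 * (Finset.univ.filter (fun j : Fin ((M+N)/2) => (σ (q0 j)).1 < M)).card := by
    rw [Finset.card_biUnion]
    · rw [Finset.sum_congr rfl (fun j _ => ?_), Finset.sum_const, smul_eq_mul, mul_comm]
      rw [Finset.card_insert_of_notMem, Finset.card_singleton]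
      simp only [Finset.mem_singleton]
      intro h
      have := congrArg Fin.val h
      simp [q0, q1] at this
    · intro a _ b _ hab
      simp only [Finset.disjoint_left, Finset.mem_insert, Finset.mem_singleton]
      rintro x (rfl | rfl) h
      all_goals {
        rcases h with h | h <;> {
          have := congrArg Fin.val h
          simp only [q0, q1] at this
          exact hab (Fin.ext (by omega)) } }
  rw [key, hR] at hL
  exact hL

lemma rsum_dsum_oddodd (hM : ¬ 2 ∣ M) (hN : ¬ 2 ∣ N)
    (A : Matrix (Fin M) (Fin M) ℝ) (B : Matrix (Fin N) (Fin N) ℝ) :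
    rsum (dsum A B) = 0 := by
  rw [rsum]
  refine Finset.sum_eq_zero (fun σ _ => ?_)
  have hnp : ¬ pureP (M := M) (N := N) σ := by
    intro hp
    have := card_filter_pure (by omega) σ hp
    omega
  rw [pureP] at hnp
  push_neg at hnp
  obtain ⟨j, hj⟩ := hnp
  exact Finset.prod_eq_zero (Finset.mem_univ j) (dsum_cross A B _ _ (by omega))

end Pure

section Rank

variable {K k : ℕ}

def rk (J : Finset (Fin K)) (hc : J.card = k) (j : Fin K) (h : j ∈ J) : Fin k :=
  (J.orderIsoOfFin hc).symm ⟨j, h⟩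

lemma emb_rk (J : Finset (Fin K)) (hc : J.card = k) (j : Fin K) (h : j ∈ J) :
    J.orderEmbOfFin hc (rk J hc j h) = j := by
  rw [← Finset.coe_orderIsoOfFin_apply, rk, OrderIso.apply_symm_apply]

lemma rk_emb (J : Finset (Fin K)) (hc : J.card = k) (a : Fin k) (h : J.orderEmbOfFin hc a ∈ J) :
    rk J hc (J.orderEmbOfFin hc a) h = a := by
  rw [rk, OrderIso.symm_apply_eq]
  exact Subtype.ext ((Finset.coe_orderIsoOfFin_apply J hc a))

lemma rk_inj (J : Finset (Fin K)) (hc : J.card = k) {j j' : Fin K} {h : j ∈ J} {h' : j' ∈ J}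
    (e : rk J hc j h = rk J hc j' h') : j = j' := by
  rw [← emb_rk J hc j h, e, emb_rk]

lemma emb_congr {J J' : Finset (Fin K)} (h : J = J') (hc : J.card = k) (hc' : J'.card = k)
    (i : Fin k) : J.orderEmbOfFin hc i = J'.orderEmbOfFin hc' i := by
  subst h; rfl

end Rank

section Phi

variable {M N : ℕ}

lemma card_compl_J (hM : 2 ∣ M) (hN : 2 ∣ N) (J : Finset (Fin ((M+N)/2)))
    (hJ : J.card = M/2) : Jᶜ.card = N/2 := by
  rw [Finset.card_compl, hJ, Fintype.card_fin]; omega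

def phiFun (hM : 2 ∣ M) (hN : 2 ∣ N) (J : Finset (Fin ((M+N)/2))) (hJ : J.card = M/2)
    (σA : Equiv.Perm (Fin M)) (σB : Equiv.Perm (Fin N)) : Fin (M+N) → Fin (M+N) := fun i =>
  if h : (⟨i.1/2, by have := i.isLt; omega⟩ : Fin ((M+N)/2)) ∈ J then
    Fin.castAdd N (σA ⟨2*(rk J hJ _ h).1 + i.1%2,
      by have := (rk J hJ _ h).isLt; omega⟩)
  else
    Fin.natAdd M (σB ⟨2*(rk Jᶜ (card_compl_J hM hN J hJ) _ (Finset.mem_compl.2 h)).1 + i.1%2,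
      by have := (rk Jᶜ (card_compl_J hM hN J hJ) _ (Finset.mem_compl.2 h)).isLt; omega⟩)

lemma phiFun_spec_pos (hM : 2 ∣ M) (hN : 2 ∣ N) (J : Finset (Fin ((M+N)/2)))
    (hJ : J.card = M/2) (σA : Equiv.Perm (Fin M)) (σB : Equiv.Perm (Fin N))
    (i : Fin (M+N)) (j : Fin ((M+N)/2)) (hij : i.1/2 = j.1) (h : j ∈ J)
    (a : Fin M) (ha : a.1 = 2*(rk J hJ j h).1 + i.1%2) :
    phiFun hM hN J hJ σA σB i = Fin.castAdd N (σA a) := by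
  have hi2 : i.1/2 < (M+N)/2 := by have := i.isLt; omega
  have e : (⟨i.1/2, hi2⟩ : Fin ((M+N)/2)) = j := Fin.ext hij
  subst e
  unfold phiFun
  rw [dif_pos h]
  exact congrArg _ (congrArg σA (Fin.ext (by rw [ha])))

lemma phiFun_spec_neg (hM : 2 ∣ M) (hN : 2 ∣ N) (J : Finset (Fin ((M+N)/2)))
    (hJ : J.card = M/2) (σA : Equiv.Perm (Fin M)) (σB : Equiv.Perm (Fin N))
    (i : Fin (M+N)) (j : Fin ((M+N)/2)) (hij : i.1/2 = j.1) (h : j ∉ J)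
    (b : Fin N) (hb : b.1 = 2*(rk Jᶜ (card_compl_J hM hN J hJ) j (Finset.mem_compl.2 h)).1 + i.1%2) :
    phiFun hM hN J hJ σA σB i = Fin.natAdd M (σB b) := by
  have hi2 : i.1/2 < (M+N)/2 := by have := i.isLt; omega
  have e : (⟨i.1/2, hi2⟩ : Fin ((M+N)/2)) = j := Fin.ext hij
  subst e
  unfold phiFun
  rw [dif_neg h]
  exact congrArg _ (congrArg σB (Fin.ext (by rw [hb])))

lemma phiFun_inj (hM : 2 ∣ M) (hN : 2 ∣ N) (J : Finset (Fin ((M+N)/2))) (hJ : J.card = M/2)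
    (σA : Equiv.Perm (Fin M)) (σB : Equiv.Perm (Fin N)) :
    Function.Injective (phiFun hM hN J hJ σA σB) := by
  intro i i' he
  have hi2 : i.1/2 < (M+N)/2 := by have := i.isLt; omega
  have hi2' : i'.1/2 < (M+N)/2 := by have := i'.isLt; omega
  by_cases h1 : (⟨i.1/2, hi2⟩ : Fin ((M+N)/2)) ∈ J <;>
    by_cases h2 : (⟨i'.1/2, hi2'⟩ : Fin ((M+N)/2)) ∈ J
  · rw [phiFun_spec_pos hM hN J hJ σA σB i ⟨i.1/2, hi2⟩ rfl h1
        ⟨2*(rk J hJ _ h1).1 + i.1%2, by have := (rk J hJ _ h1).isLt; omega⟩ rfl,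
      phiFun_spec_pos hM hN J hJ σA σB i' ⟨i'.1/2, hi2'⟩ rfl h2
        ⟨2*(rk J hJ _ h2).1 + i'.1%2, by have := (rk J hJ _ h2).isLt; omega⟩ rfl] at he
    have hv := congrArg Fin.val he
    simp only [Fin.coe_castAdd] at hv
    have := σA.injective (Fin.ext hv)
    have hval : 2*(rk J hJ _ h1).1 + i.1%2 = 2*(rk J hJ _ h2).1 + i'.1%2 :=
      congrArg Fin.val this
    have hrk : (rk J hJ _ h1) = (rk J hJ _ h2) := Fin.ext (by omega)
    have hjj := rk_inj J hJ hrk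
    have : i.1/2 = i'.1/2 := congrArg Fin.val hjj
    exact Fin.ext (by omega)
  · rw [phiFun_spec_pos hM hN J hJ σA σB i ⟨i.1/2, hi2⟩ rfl h1
        ⟨2*(rk J hJ _ h1).1 + i.1%2, by have := (rk J hJ _ h1).isLt; omega⟩ rfl,
      phiFun_spec_neg hM hN J hJ σA σB i' ⟨i'.1/2, hi2'⟩ rfl h2
        ⟨2*(rk Jᶜ (card_compl_J hM hN J hJ) _ (Finset.mem_compl.2 h2)).1 + i'.1%2,
          by have := (rk Jᶜ (card_compl_J hM hN J hJ) _ (Finset.mem_compl.2 h2)).isLt; omega⟩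
        rfl] at he
    have hv := congrArg Fin.val he
    simp only [Fin.coe_castAdd, Fin.coe_natAdd] at hv
    have := (σA ⟨2*(rk J hJ _ h1).1 + i.1%2, by have := (rk J hJ _ h1).isLt; omega⟩).isLt
    omega
  · rw [phiFun_spec_neg hM hN J hJ σA σB i ⟨i.1/2, hi2⟩ rfl h1
        ⟨2*(rk Jᶜ (card_compl_J hM hN J hJ) _ (Finset.mem_compl.2 h1)).1 + i.1%2,
          by have := (rk Jᶜ (card_compl_J hM hN J hJ) _ (Finset.mem_compl.2 h1)).isLt; omega⟩
        rfl,
      phiFun_spec_pos hM hN J hJ σA σB i' ⟨i'.1/2, hi2'⟩ rfl h2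
        ⟨2*(rk J hJ _ h2).1 + i'.1%2, by have := (rk J hJ _ h2).isLt; omega⟩ rfl] at he
    have hv := congrArg Fin.val he
    simp only [Fin.coe_castAdd, Fin.coe_natAdd] at hv
    have := (σA ⟨2*(rk J hJ _ h2).1 + i'.1%2, by have := (rk J hJ _ h2).isLt; omega⟩).isLt
    omega
  · rw [phiFun_spec_neg hM hN J hJ σA σB i ⟨i.1/2, hi2⟩ rfl h1
        ⟨2*(rk Jᶜ (card_compl_J hM hN J hJ) _ (Finset.mem_compl.2 h1)).1 + i.1%2,
          by have := (rk Jᶜ (card_compl_J hM hN J hJ) _ (Finset.mem_compl.2 h1)).isLt; omega⟩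
        rfl,
      phiFun_spec_neg hM hN J hJ σA σB i' ⟨i'.1/2, hi2'⟩ rfl h2
        ⟨2*(rk Jᶜ (card_compl_J hM hN J hJ) _ (Finset.mem_compl.2 h2)).1 + i'.1%2,
          by have := (rk Jᶜ (card_compl_J hM hN J hJ) _ (Finset.mem_compl.2 h2)).isLt; omega⟩
        rfl] at he
    have hnat : Function.Injective (Fin.natAdd M : Fin N → Fin (M+N)) := by
      intro u v huv
      have := congrArg Fin.val huv
      simp only [Fin.coe_natAdd] at this
      exact Fin.ext (by omega)
    have := σB.injective (hnat he)
    have hval := congrArg Fin.val this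
    simp only at hval
    have hrk : (rk Jᶜ (card_compl_J hM hN J hJ) _ (Finset.mem_compl.2 h1))
        = (rk Jᶜ (card_compl_J hM hN J hJ) _ (Finset.mem_compl.2 h2)) := Fin.ext (by omega)
    have hjj := rk_inj Jᶜ (card_compl_J hM hN J hJ) hrk
    have : i.1/2 = i'.1/2 := congrArg Fin.val hjj
    exact Fin.ext (by omega)

noncomputable def Phi (hM : 2 ∣ M) (hN : 2 ∣ N) (J : Finset (Fin ((M+N)/2)))
    (hJ : J.card = M/2) (σA : Equiv.Perm (Fin M)) (σB : Equiv.Perm (Fin N)) :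
    Equiv.Perm (Fin (M+N)) :=
  Equiv.ofBijective (phiFun hM hN J hJ σA σB)
    (Finite.injective_iff_bijective.mp (phiFun_inj hM hN J hJ σA σB))

lemma Phi_apply (hM : 2 ∣ M) (hN : 2 ∣ N) (J : Finset (Fin ((M+N)/2)))
    (hJ : J.card = M/2) (σA : Equiv.Perm (Fin M)) (σB : Equiv.Perm (Fin N)) (i : Fin (M+N)) :
    Phi hM hN J hJ σA σB i = phiFun hM hN J hJ σA σB i := rfl

end Phi

section Psi

variable {M N : ℕ}

def Jset {M N : ℕ} (σ : Equiv.Perm (Fin (M+N))) : Finset (Fin ((M+N)/2)) :=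
  Finset.univ.filter (fun j => (σ (q0 j)).1 < M)

lemma mem_Jset {σ : Equiv.Perm (Fin (M+N))} {j : Fin ((M+N)/2)} :
    j ∈ Jset σ ↔ (σ (q0 j)).1 < M := by simp [Jset]

lemma Jset_card (hM : 2 ∣ M) (hN : 2 ∣ N) (σ : Equiv.Perm (Fin (M+N)))
    (hp : pureP (M := M) (N := N) σ) : (Jset σ).card = M/2 := by
  have := card_filter_pure (by omega) σ hp
  rw [Jset]; omega

lemma val_lt_of (σ : Equiv.Perm (Fin (M+N))) (hp : pureP (M := M) (N := N) σ)
    (j : Fin ((M+N)/2)) (hj : (σ (q0 j)).1 < M) (p : Fin (M+N))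
    (hpv : p.1 = 2*j.1 ∨ p.1 = 2*j.1+1) : (σ p).1 < M := by
  rcases hpv with h | h
  · have : p = q0 j := Fin.ext h; rw [this]; exact hj
  · have : p = q1 j := Fin.ext h; rw [this]; exact (hp j).1 hj

lemma val_ge_of (σ : Equiv.Perm (Fin (M+N))) (hp : pureP (M := M) (N := N) σ)
    (j : Fin ((M+N)/2)) (hj : ¬ (σ (q0 j)).1 < M) (p : Fin (M+N))
    (hpv : p.1 = 2*j.1 ∨ p.1 = 2*j.1+1) : ¬ (σ p).1 < M := by
  rcases hpv with h | h
  · have : p = q0 j := Fin.ext h; rw [this]; exact hj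
  · have : p = q1 j := Fin.ext h
    rw [this]; intro hcon; exact hj ((hp j).2 hcon)

/-- the position in `Fin (M+N)` encoded by `a : Fin M` through the sorted elements of `Jset σ`. -/
def posA (hM : 2 ∣ M) (hN : 2 ∣ N) (σ : Equiv.Perm (Fin (M+N)))
    (hc : (Jset σ).card = M/2) (a : Fin M) : Fin (M+N) :=
  ⟨2*((Jset σ).orderEmbOfFin hc ⟨a.1/2, by have := a.isLt; omega⟩).1 + a.1%2,
    by have := ((Jset σ).orderEmbOfFin hc ⟨a.1/2, by have := a.isLt; omega⟩).isLt; omega⟩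

lemma posA_val (hM : 2 ∣ M) (hN : 2 ∣ N) (σ : Equiv.Perm (Fin (M+N)))
    (hc : (Jset σ).card = M/2) (a : Fin M) :
    (posA hM hN σ hc a).1
      = 2*((Jset σ).orderEmbOfFin hc ⟨a.1/2, by have := a.isLt; omega⟩).1 + a.1%2 := rfl

def posB (hM : 2 ∣ M) (hN : 2 ∣ N) (σ : Equiv.Perm (Fin (M+N)))
    (hcC : (Jset σ)ᶜ.card = N/2) (b : Fin N) : Fin (M+N) :=
  ⟨2*((Jset σ)ᶜ.orderEmbOfFin hcC ⟨b.1/2, by have := b.isLt; omega⟩).1 + b.1%2,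
    by have := ((Jset σ)ᶜ.orderEmbOfFin hcC ⟨b.1/2, by have := b.isLt; omega⟩).isLt; omega⟩

lemma posB_val (hM : 2 ∣ M) (hN : 2 ∣ N) (σ : Equiv.Perm (Fin (M+N)))
    (hcC : (Jset σ)ᶜ.card = N/2) (b : Fin N) :
    (posB hM hN σ hcC b).1
      = 2*((Jset σ)ᶜ.orderEmbOfFin hcC ⟨b.1/2, by have := b.isLt; omega⟩).1 + b.1%2 := rfl

lemma posA_lt (hM : 2 ∣ M) (hN : 2 ∣ N) (σ : Equiv.Perm (Fin (M+N)))
    (hp : pureP (M := M) (N := N) σ) (hc : (Jset σ).card = M/2) (a : Fin M) :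
    (σ (posA hM hN σ hc a)).1 < M :=
  val_lt_of σ hp ((Jset σ).orderEmbOfFin hc ⟨a.1/2, by have := a.isLt; omega⟩)
    (mem_Jset.mp (Finset.orderEmbOfFin_mem _ _ _)) _ (by rw [posA_val hM hN σ hc a]; omega)

lemma posB_ge (hM : 2 ∣ M) (hN : 2 ∣ N) (σ : Equiv.Perm (Fin (M+N)))
    (hp : pureP (M := M) (N := N) σ) (hcC : (Jset σ)ᶜ.card = N/2) (b : Fin N) :
    ¬ (σ (posB hM hN σ hcC b)).1 < M :=
  val_ge_of σ hp ((Jset σ)ᶜ.orderEmbOfFin hcC ⟨b.1/2, by have := b.isLt; omega⟩)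
    (by
      simpa [mem_Jset] using (Finset.mem_compl.mp
        (Finset.orderEmbOfFin_mem ((Jset σ)ᶜ) hcC ⟨b.1/2, by have := b.isLt; omega⟩)))
    _ (by rw [posB_val hM hN σ hcC b]; omega)

def psiAFun (hM : 2 ∣ M) (hN : 2 ∣ N) (σ : Equiv.Perm (Fin (M+N)))
    (hp : pureP (M := M) (N := N) σ) (hc : (Jset σ).card = M/2) : Fin M → Fin M := fun a =>
  ⟨(σ (posA hM hN σ hc a)).1, posA_lt hM hN σ hp hc a⟩

def psiBFun (hM : 2 ∣ M) (hN : 2 ∣ N) (σ : Equiv.Perm (Fin (M+N)))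
    (hp : pureP (M := M) (N := N) σ) (hcC : (Jset σ)ᶜ.card = N/2) : Fin N → Fin N := fun b =>
  ⟨(σ (posB hM hN σ hcC b)).1 - M,
    by have h1 := posB_ge hM hN σ hp hcC b; have := (σ (posB hM hN σ hcC b)).isLt; omega⟩

lemma psiAFun_val (hM : 2 ∣ M) (hN : 2 ∣ N) (σ : Equiv.Perm (Fin (M+N)))
    (hp : pureP (M := M) (N := N) σ) (hc : (Jset σ).card = M/2) (a : Fin M) :
    (psiAFun hM hN σ hp hc a).1 = (σ (posA hM hN σ hc a)).1 := rfl

lemma psiBFun_val (hM : 2 ∣ M) (hN : 2 ∣ N) (σ : Equiv.Perm (Fin (M+N)))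
    (hp : pureP (M := M) (N := N) σ) (hcC : (Jset σ)ᶜ.card = N/2) (b : Fin N) :
    (psiBFun hM hN σ hp hcC b).1 = (σ (posB hM hN σ hcC b)).1 - M := rfl

lemma psiAFun_inj (hM : 2 ∣ M) (hN : 2 ∣ N) (σ : Equiv.Perm (Fin (M+N)))
    (hp : pureP (M := M) (N := N) σ) (hc : (Jset σ).card = M/2) :
    Function.Injective (psiAFun hM hN σ hp hc) := by
  intro a a' he
  have hv := congrArg Fin.val he
  rw [psiAFun_val, psiAFun_val] at hv
  have hpos : posA hM hN σ hc a = posA hM hN σ hc a' := σ.injective (Fin.ext hv)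
  have hval := congrArg Fin.val hpos
  rw [posA_val, posA_val] at hval
  have hemb : ((Jset σ).orderEmbOfFin hc ⟨a.1/2, by have := a.isLt; omega⟩)
      = ((Jset σ).orderEmbOfFin hc ⟨a'.1/2, by have := a'.isLt; omega⟩) := Fin.ext (by omega)
  have := ((Jset σ).orderEmbOfFin hc).injective hemb
  have hdiv : a.1/2 = a'.1/2 := congrArg Fin.val this
  exact Fin.ext (by omega)

lemma psiBFun_inj (hM : 2 ∣ M) (hN : 2 ∣ N) (σ : Equiv.Perm (Fin (M+N)))
    (hp : pureP (M := M) (N := N) σ) (hcC : (Jset σ)ᶜ.card = N/2) :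
    Function.Injective (psiBFun hM hN σ hp hcC) := by
  intro b b' he
  have hv0 := congrArg Fin.val he
  rw [psiBFun_val, psiBFun_val] at hv0
  have hge := posB_ge hM hN σ hp hcC b
  have hge' := posB_ge hM hN σ hp hcC b'
  have hv : (σ (posB hM hN σ hcC b)).1 = (σ (posB hM hN σ hcC b')).1 := by omega
  have hpos : posB hM hN σ hcC b = posB hM hN σ hcC b' := σ.injective (Fin.ext hv)
  have hval := congrArg Fin.val hpos
  rw [posB_val, posB_val] at hval
  have hemb : (((Jset σ)ᶜ).orderEmbOfFin hcC ⟨b.1/2, by have := b.isLt; omega⟩)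
      = (((Jset σ)ᶜ).orderEmbOfFin hcC ⟨b'.1/2, by have := b'.isLt; omega⟩) := Fin.ext (by omega)
  have := (((Jset σ)ᶜ).orderEmbOfFin hcC).injective hemb
  have hdiv : b.1/2 = b'.1/2 := congrArg Fin.val this
  exact Fin.ext (by omega)

noncomputable def PsiA (hM : 2 ∣ M) (hN : 2 ∣ N) (σ : Equiv.Perm (Fin (M+N)))
    (hp : pureP (M := M) (N := N) σ) (hc : (Jset σ).card = M/2) : Equiv.Perm (Fin M) :=
  Equiv.ofBijective _ (Finite.injective_iff_bijective.mp (psiAFun_inj hM hN σ hp hc))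

noncomputable def PsiB (hM : 2 ∣ M) (hN : 2 ∣ N) (σ : Equiv.Perm (Fin (M+N)))
    (hp : pureP (M := M) (N := N) σ) (hcC : (Jset σ)ᶜ.card = N/2) : Equiv.Perm (Fin N) :=
  Equiv.ofBijective _ (Finite.injective_iff_bijective.mp (psiBFun_inj hM hN σ hp hcC))

lemma PsiA_val (hM : 2 ∣ M) (hN : 2 ∣ N) (σ : Equiv.Perm (Fin (M+N)))
    (hp : pureP (M := M) (N := N) σ) (hc : (Jset σ).card = M/2) (a : Fin M) :
    (PsiA hM hN σ hp hc a).1 = (σ (posA hM hN σ hc a)).1 := rfl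

lemma PsiB_val (hM : 2 ∣ M) (hN : 2 ∣ N) (σ : Equiv.Perm (Fin (M+N)))
    (hp : pureP (M := M) (N := N) σ) (hcC : (Jset σ)ᶜ.card = N/2) (b : Fin N) :
    (PsiB hM hN σ hp hcC b).1 = (σ (posB hM hN σ hcC b)).1 - M := rfl

lemma posA_eq (hM : 2 ∣ M) (hN : 2 ∣ N) (σ : Equiv.Perm (Fin (M+N)))
    (hc : (Jset σ).card = M/2) (a : Fin M) (k : Fin (M/2)) (hk : a.1/2 = k.1)
    (p : Fin (M+N)) (hpv : p.1 = 2*((Jset σ).orderEmbOfFin hc k).1 + a.1%2) :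
    posA hM hN σ hc a = p := by
  have e : (⟨a.1/2, by have := a.isLt; omega⟩ : Fin (M/2)) = k := Fin.ext hk
  apply Fin.ext
  rw [posA_val, hpv, e]

lemma posB_eq (hM : 2 ∣ M) (hN : 2 ∣ N) (σ : Equiv.Perm (Fin (M+N)))
    (hcC : (Jset σ)ᶜ.card = N/2) (b : Fin N) (k : Fin (N/2)) (hk : b.1/2 = k.1)
    (p : Fin (M+N)) (hpv : p.1 = 2*(((Jset σ)ᶜ).orderEmbOfFin hcC k).1 + b.1%2) :
    posB hM hN σ hcC b = p := by
  have e : (⟨b.1/2, by have := b.isLt; omega⟩ : Fin (N/2)) = k := Fin.ext hk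
  apply Fin.ext
  rw [posB_val, hpv, e]

end Psi

section Grand

variable {M N : ℕ}

lemma Phi_term (hM : 2 ∣ M) (hN : 2 ∣ N) (J : Finset (Fin ((M+N)/2))) (hJ : J.card = M/2)
    (σA : Equiv.Perm (Fin M)) (σB : Equiv.Perm (Fin N))
    (A : Matrix (Fin M) (Fin M) ℝ) (B : Matrix (Fin N) (Fin N) ℝ) :
    (∏ j : Fin ((M+N)/2),
        dsum A B (Phi hM hN J hJ σA σB (q0 j)) (Phi hM hN J hJ σA σB (q1 j)))
      = (∏ k : Fin (M/2), A (σA (q0 k)) (σA (q1 k)))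
        * (∏ k : Fin (N/2), B (σB (q0 k)) (σB (q1 k))) := by
  rw [← Finset.prod_mul_prod_compl J]
  congr 1
  · refine Finset.prod_bij' (fun j hj => rk J hJ j hj)
      (fun k _ => J.orderEmbOfFin hJ k) (fun j hj => Finset.mem_univ _)
      (fun k _ => Finset.orderEmbOfFin_mem _ _ _)
      (fun j hj => emb_rk J hJ j hj) (fun k _ => rk_emb J hJ k _) ?_
    intro j hj
    rw [Phi_apply, Phi_apply,
      phiFun_spec_pos hM hN J hJ σA σB (q0 j) j (show (2*j.1)/2 = j.1 by omega) hj
        (q0 (rk J hJ j hj)) (show 2*(rk J hJ j hj).1 = 2*(rk J hJ j hj).1 + (2*j.1)%2 by omega),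
      phiFun_spec_pos hM hN J hJ σA σB (q1 j) j (show (2*j.1+1)/2 = j.1 by omega) hj
        (q1 (rk J hJ j hj))
        (show 2*(rk J hJ j hj).1+1 = 2*(rk J hJ j hj).1 + (2*j.1+1)%2 by omega),
      dsum_apply_ll]
  · refine Finset.prod_bij' (fun j hj => rk Jᶜ (card_compl_J hM hN J hJ) j hj)
      (fun k _ => Jᶜ.orderEmbOfFin (card_compl_J hM hN J hJ) k) (fun j hj => Finset.mem_univ _)
      (fun k _ => Finset.orderEmbOfFin_mem _ _ _)
      (fun j hj => emb_rk Jᶜ (card_compl_J hM hN J hJ) j hj)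
      (fun k _ => rk_emb Jᶜ (card_compl_J hM hN J hJ) k _) ?_
    intro j hj
    have hnj : j ∉ J := Finset.mem_compl.mp hj
    rw [Phi_apply, Phi_apply,
      phiFun_spec_neg hM hN J hJ σA σB (q0 j) j (show (2*j.1)/2 = j.1 by omega) hnj
        (q0 (rk Jᶜ (card_compl_J hM hN J hJ) j hj))
        (show 2*(rk Jᶜ (card_compl_J hM hN J hJ) j hj).1
          = 2*(rk Jᶜ (card_compl_J hM hN J hJ) j (Finset.mem_compl.2 hnj)).1 + (2*j.1)%2
          by omega),
      phiFun_spec_neg hM hN J hJ σA σB (q1 j) j (show (2*j.1+1)/2 = j.1 by omega) hnj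
        (q1 (rk Jᶜ (card_compl_J hM hN J hJ) j hj))
        (show 2*(rk Jᶜ (card_compl_J hM hN J hJ) j hj).1+1
          = 2*(rk Jᶜ (card_compl_J hM hN J hJ) j (Finset.mem_compl.2 hnj)).1 + (2*j.1+1)%2
          by omega),
      dsum_apply_rr]

lemma Phi_pure (hM : 2 ∣ M) (hN : 2 ∣ N) (J : Finset (Fin ((M+N)/2))) (hJ : J.card = M/2)
    (σA : Equiv.Perm (Fin M)) (σB : Equiv.Perm (Fin N)) :
    pureP (M := M) (N := N) (Phi hM hN J hJ σA σB) := by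
  intro j
  by_cases hj : j ∈ J
  · rw [Phi_apply, Phi_apply,
      phiFun_spec_pos hM hN J hJ σA σB (q0 j) j (show (2*j.1)/2 = j.1 by omega) hj
        (q0 (rk J hJ j hj)) (show 2*(rk J hJ j hj).1 = 2*(rk J hJ j hj).1 + (2*j.1)%2 by omega),
      phiFun_spec_pos hM hN J hJ σA σB (q1 j) j (show (2*j.1+1)/2 = j.1 by omega) hj
        (q1 (rk J hJ j hj))
        (show 2*(rk J hJ j hj).1+1 = 2*(rk J hJ j hj).1 + (2*j.1+1)%2 by omega)]
    simp only [Fin.coe_castAdd]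
    exact iff_of_true (σA _).isLt (σA _).isLt
  · rw [Phi_apply, Phi_apply,
      phiFun_spec_neg hM hN J hJ σA σB (q0 j) j (show (2*j.1)/2 = j.1 by omega) hj
        (q0 (rk Jᶜ (card_compl_J hM hN J hJ) j (Finset.mem_compl.2 hj)))
        (show 2*(rk Jᶜ (card_compl_J hM hN J hJ) j (Finset.mem_compl.2 hj)).1
          = 2*(rk Jᶜ (card_compl_J hM hN J hJ) j (Finset.mem_compl.2 hj)).1 + (2*j.1)%2
          by omega),
      phiFun_spec_neg hM hN J hJ σA σB (q1 j) j (show (2*j.1+1)/2 = j.1 by omega) hj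
        (q1 (rk Jᶜ (card_compl_J hM hN J hJ) j (Finset.mem_compl.2 hj)))
        (show 2*(rk Jᶜ (card_compl_J hM hN J hJ) j (Finset.mem_compl.2 hj)).1+1
          = 2*(rk Jᶜ (card_compl_J hM hN J hJ) j (Finset.mem_compl.2 hj)).1 + (2*j.1+1)%2
          by omega)]
    simp only [Fin.coe_natAdd]
    exact iff_of_false (by omega) (by omega)

lemma Jset_Phi (hM : 2 ∣ M) (hN : 2 ∣ N) (J : Finset (Fin ((M+N)/2))) (hJ : J.card = M/2)
    (σA : Equiv.Perm (Fin M)) (σB : Equiv.Perm (Fin N)) :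
    Jset (Phi hM hN J hJ σA σB) = J := by
  ext j
  rw [mem_Jset]
  by_cases hj : j ∈ J
  · rw [Phi_apply,
      phiFun_spec_pos hM hN J hJ σA σB (q0 j) j (show (2*j.1)/2 = j.1 by omega) hj
        (q0 (rk J hJ j hj)) (show 2*(rk J hJ j hj).1 = 2*(rk J hJ j hj).1 + (2*j.1)%2 by omega)]
    simp only [Fin.coe_castAdd]
    exact iff_of_true (σA _).isLt hj
  · rw [Phi_apply,
      phiFun_spec_neg hM hN J hJ σA σB (q0 j) j (show (2*j.1)/2 = j.1 by omega) hj
        (q0 (rk Jᶜ (card_compl_J hM hN J hJ) j (Finset.mem_compl.2 hj)))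
        (show 2*(rk Jᶜ (card_compl_J hM hN J hJ) j (Finset.mem_compl.2 hj)).1
          = 2*(rk Jᶜ (card_compl_J hM hN J hJ) j (Finset.mem_compl.2 hj)).1 + (2*j.1)%2
          by omega)]
    simp only [Fin.coe_natAdd]
    exact iff_of_false (by omega) hj

end Grand

section Inverse

variable {M N : ℕ}

lemma Phi_Psi (hM : 2 ∣ M) (hN : 2 ∣ N) (σ : Equiv.Perm (Fin (M+N)))
    (hp : pureP (M := M) (N := N) σ) (hc : (Jset σ).card = M/2)
    (hcC : (Jset σ)ᶜ.card = N/2) :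
    Phi hM hN (Jset σ) hc (PsiA hM hN σ hp hc) (PsiB hM hN σ hp hcC) = σ := by
  apply Equiv.ext; intro i
  rw [Phi_apply]
  have hi2 : i.1/2 < (M+N)/2 := by have := i.isLt; omega
  by_cases hmem : (⟨i.1/2, hi2⟩ : Fin ((M+N)/2)) ∈ Jset σ
  · rw [phiFun_spec_pos hM hN (Jset σ) hc _ _ i ⟨i.1/2, hi2⟩ rfl hmem
      ⟨2*(rk (Jset σ) hc ⟨i.1/2, hi2⟩ hmem).1 + i.1%2,
        by have := (rk (Jset σ) hc ⟨i.1/2, hi2⟩ hmem).isLt; omega⟩ rfl]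
    apply Fin.ext
    simp only [Fin.coe_castAdd]
    rw [PsiA_val]
    have hpos : posA hM hN σ hc
        ⟨2*(rk (Jset σ) hc ⟨i.1/2, hi2⟩ hmem).1 + i.1%2,
          by have := (rk (Jset σ) hc ⟨i.1/2, hi2⟩ hmem).isLt; omega⟩ = i := by
      refine posA_eq hM hN σ hc _ (rk (Jset σ) hc ⟨i.1/2, hi2⟩ hmem)
        (show (2*(rk (Jset σ) hc ⟨i.1/2, hi2⟩ hmem).1 + i.1%2)/2
          = (rk (Jset σ) hc ⟨i.1/2, hi2⟩ hmem).1 by omega) i ?_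
      rw [emb_rk (Jset σ) hc ⟨i.1/2, hi2⟩ hmem]
      show i.1 = 2*(i.1/2) + (2*(rk (Jset σ) hc ⟨i.1/2, hi2⟩ hmem).1 + i.1%2)%2
      omega
    rw [hpos]
  · rw [phiFun_spec_neg hM hN (Jset σ) hc _ _ i ⟨i.1/2, hi2⟩ rfl hmem
      ⟨2*(rk (Jset σ)ᶜ (card_compl_J hM hN (Jset σ) hc) ⟨i.1/2, hi2⟩ (Finset.mem_compl.2 hmem)).1
          + i.1%2,
        by have := (rk (Jset σ)ᶜ (card_compl_J hM hN (Jset σ) hc) ⟨i.1/2, hi2⟩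
            (Finset.mem_compl.2 hmem)).isLt; omega⟩ rfl]
    apply Fin.ext
    simp only [Fin.coe_natAdd]
    rw [PsiB_val]
    have hpos : posB hM hN σ hcC
        ⟨2*(rk (Jset σ)ᶜ (card_compl_J hM hN (Jset σ) hc) ⟨i.1/2, hi2⟩
            (Finset.mem_compl.2 hmem)).1 + i.1%2,
          by have := (rk (Jset σ)ᶜ (card_compl_J hM hN (Jset σ) hc) ⟨i.1/2, hi2⟩
              (Finset.mem_compl.2 hmem)).isLt; omega⟩ = i := by
      refine posB_eq hM hN σ hcC _
        (rk (Jset σ)ᶜ (card_compl_J hM hN (Jset σ) hc) ⟨i.1/2, hi2⟩ (Finset.mem_compl.2 hmem))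
        (show (2*(rk (Jset σ)ᶜ (card_compl_J hM hN (Jset σ) hc) ⟨i.1/2, hi2⟩
            (Finset.mem_compl.2 hmem)).1 + i.1%2)/2
          = (rk (Jset σ)ᶜ (card_compl_J hM hN (Jset σ) hc) ⟨i.1/2, hi2⟩
            (Finset.mem_compl.2 hmem)).1 by omega) i ?_
      rw [show ((Jset σ)ᶜ).orderEmbOfFin hcC
            (rk (Jset σ)ᶜ (card_compl_J hM hN (Jset σ) hc) ⟨i.1/2, hi2⟩
              (Finset.mem_compl.2 hmem))
          = ((Jset σ)ᶜ).orderEmbOfFin (card_compl_J hM hN (Jset σ) hc)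
            (rk (Jset σ)ᶜ (card_compl_J hM hN (Jset σ) hc) ⟨i.1/2, hi2⟩
              (Finset.mem_compl.2 hmem)) from rfl,
        emb_rk (Jset σ)ᶜ (card_compl_J hM hN (Jset σ) hc) ⟨i.1/2, hi2⟩ (Finset.mem_compl.2 hmem)]
      show i.1 = 2*(i.1/2) + (2*(rk (Jset σ)ᶜ (card_compl_J hM hN (Jset σ) hc) ⟨i.1/2, hi2⟩
          (Finset.mem_compl.2 hmem)).1 + i.1%2)%2
      omega
    rw [hpos]
    have hge : ¬ (σ i).1 < M := by
      refine val_ge_of σ hp ⟨i.1/2, hi2⟩ (by rwa [mem_Jset] at hmem) i ?_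
      show i.1 = 2*(i.1/2) ∨ i.1 = 2*(i.1/2)+1
      omega
    have := i.isLt
    omega

lemma PsiA_Phi (hM : 2 ∣ M) (hN : 2 ∣ N) (J : Finset (Fin ((M+N)/2))) (hJ : J.card = M/2)
    (σA : Equiv.Perm (Fin M)) (σB : Equiv.Perm (Fin N))
    (hp : pureP (M := M) (N := N) (Phi hM hN J hJ σA σB))
    (hc : (Jset (Phi hM hN J hJ σA σB)).card = M/2) :
    PsiA hM hN (Phi hM hN J hJ σA σB) hp hc = σA := by
  apply Equiv.ext; intro a
  apply Fin.ext
  rw [PsiA_val]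
  have ha2 : a.1/2 < M/2 := by have := a.isLt; omega
  have hj₀ : J.orderEmbOfFin hJ ⟨a.1/2, ha2⟩ ∈ J := Finset.orderEmbOfFin_mem _ _ _
  have hpos : posA hM hN (Phi hM hN J hJ σA σB) hc a
      = ⟨2*(J.orderEmbOfFin hJ ⟨a.1/2, ha2⟩).1 + a.1%2,
          by have := (J.orderEmbOfFin hJ ⟨a.1/2, ha2⟩).isLt; omega⟩ := by
    refine posA_eq hM hN _ hc a ⟨a.1/2, ha2⟩ rfl _ ?_
    rw [emb_congr (Jset_Phi hM hN J hJ σA σB) hc hJ ⟨a.1/2, ha2⟩]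
  rw [hpos, Phi_apply,
    phiFun_spec_pos hM hN J hJ σA σB _ (J.orderEmbOfFin hJ ⟨a.1/2, ha2⟩)
      (show (2*(J.orderEmbOfFin hJ ⟨a.1/2, ha2⟩).1 + a.1%2)/2
        = (J.orderEmbOfFin hJ ⟨a.1/2, ha2⟩).1 by omega) hj₀ a ?_]
  · rfl
  · rw [rk_emb J hJ ⟨a.1/2, ha2⟩ hj₀]
    show a.1 = 2*(a.1/2) + (2*(J.orderEmbOfFin hJ ⟨a.1/2, ha2⟩).1 + a.1%2)%2
    omega

lemma PsiB_Phi (hM : 2 ∣ M) (hN : 2 ∣ N) (J : Finset (Fin ((M+N)/2))) (hJ : J.card = M/2)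
    (σA : Equiv.Perm (Fin M)) (σB : Equiv.Perm (Fin N))
    (hp : pureP (M := M) (N := N) (Phi hM hN J hJ σA σB))
    (hcC : (Jset (Phi hM hN J hJ σA σB))ᶜ.card = N/2) :
    PsiB hM hN (Phi hM hN J hJ σA σB) hp hcC = σB := by
  apply Equiv.ext; intro b
  apply Fin.ext
  rw [PsiB_val]
  have hb2 : b.1/2 < N/2 := by have := b.isLt; omega
  have hcompl : (Jset (Phi hM hN J hJ σA σB))ᶜ = Jᶜ :=
    congrArg _ (Jset_Phi hM hN J hJ σA σB)
  have hj₀ : Jᶜ.orderEmbOfFin (card_compl_J hM hN J hJ) ⟨b.1/2, hb2⟩ ∈ Jᶜ :=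
    Finset.orderEmbOfFin_mem _ _ _
  have hnj : Jᶜ.orderEmbOfFin (card_compl_J hM hN J hJ) ⟨b.1/2, hb2⟩ ∉ J :=
    Finset.mem_compl.mp hj₀
  have hpos : posB hM hN (Phi hM hN J hJ σA σB) hcC b
      = ⟨2*(Jᶜ.orderEmbOfFin (card_compl_J hM hN J hJ) ⟨b.1/2, hb2⟩).1 + b.1%2,
          by have := (Jᶜ.orderEmbOfFin (card_compl_J hM hN J hJ) ⟨b.1/2, hb2⟩).isLt; omega⟩ := by
    refine posB_eq hM hN _ hcC b ⟨b.1/2, hb2⟩ rfl _ ?_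
    rw [emb_congr hcompl hcC (card_compl_J hM hN J hJ) ⟨b.1/2, hb2⟩]
  rw [hpos, Phi_apply,
    phiFun_spec_neg hM hN J hJ σA σB _ (Jᶜ.orderEmbOfFin (card_compl_J hM hN J hJ) ⟨b.1/2, hb2⟩)
      (show (2*(Jᶜ.orderEmbOfFin (card_compl_J hM hN J hJ) ⟨b.1/2, hb2⟩).1 + b.1%2)/2
        = (Jᶜ.orderEmbOfFin (card_compl_J hM hN J hJ) ⟨b.1/2, hb2⟩).1 by omega) hnj b ?_]
  · simp only [Fin.coe_natAdd]
    omega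
  · rw [show rk Jᶜ (card_compl_J hM hN J hJ)
        (Jᶜ.orderEmbOfFin (card_compl_J hM hN J hJ) ⟨b.1/2, hb2⟩) (Finset.mem_compl.2 hnj)
      = rk Jᶜ (card_compl_J hM hN J hJ)
        (Jᶜ.orderEmbOfFin (card_compl_J hM hN J hJ) ⟨b.1/2, hb2⟩) hj₀ from rfl,
      rk_emb Jᶜ (card_compl_J hM hN J hJ) ⟨b.1/2, hb2⟩ hj₀]
    show b.1 = 2*(b.1/2)
      + (2*(Jᶜ.orderEmbOfFin (card_compl_J hM hN J hJ) ⟨b.1/2, hb2⟩).1 + b.1%2)%2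
    omega

end Inverse

section Assemble

variable {M N : ℕ}

lemma rsum_dsum_even (hM : 2 ∣ M) (hN : 2 ∣ N)
    (A : Matrix (Fin M) (Fin M) ℝ) (B : Matrix (Fin N) (Fin N) ℝ) :
    rsum (dsum A B) = ((((M+N)/2).choose (M/2) : ℕ) : ℝ) * (rsum A * rsum B) := by
  classical
  rw [rsum_dsum_filter]
  have hbij :
      (∑ σ ∈ Finset.univ.filter (fun σ => pureP (M := M) (N := N) σ),
        ∏ j : Fin ((M+N)/2), dsum A B (σ (q0 j)) (σ (q1 j)))
      = ∑ x ∈ ((Finset.univ.powersetCard (M/2)) ×ˢ (Finset.univ ×ˢ Finset.univ) :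
          Finset (Finset (Fin ((M+N)/2)) × Equiv.Perm (Fin M) × Equiv.Perm (Fin N))),
        (∏ k : Fin (M/2), A (x.2.1 (q0 k)) (x.2.1 (q1 k)))
          * (∏ k : Fin (N/2), B (x.2.2 (q0 k)) (x.2.2 (q1 k))) := by
    refine Finset.sum_bij'
      (fun σ hσ => (Jset σ,
        PsiA hM hN σ ((Finset.mem_filter.mp hσ).2)
          (Jset_card hM hN σ (Finset.mem_filter.mp hσ).2),
        PsiB hM hN σ ((Finset.mem_filter.mp hσ).2)
          (card_compl_J hM hN _ (Jset_card hM hN σ (Finset.mem_filter.mp hσ).2))))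
      (fun x hx => Phi hM hN x.1
        (Finset.mem_powersetCard_univ.mp (Finset.mem_product.mp hx).1) x.2.1 x.2.2)
      ?_ ?_ ?_ ?_ ?_
    · intro σ hσ
      rw [Finset.mem_product]
      refine ⟨Finset.mem_powersetCard_univ.mpr
        (Jset_card hM hN σ (Finset.mem_filter.mp hσ).2), ?_⟩
      rw [Finset.mem_product]
      exact ⟨Finset.mem_univ _, Finset.mem_univ _⟩
    · intro x hx
      rw [Finset.mem_filter]
      exact ⟨Finset.mem_univ _, Phi_pure hM hN _ _ _ _⟩
    · intro σ hσ
      exact Phi_Psi hM hN σ ((Finset.mem_filter.mp hσ).2)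
        (Jset_card hM hN σ (Finset.mem_filter.mp hσ).2)
        (card_compl_J hM hN _ (Jset_card hM hN σ (Finset.mem_filter.mp hσ).2))
    · intro x hx
      have h1 := Jset_Phi hM hN x.1
        (Finset.mem_powersetCard_univ.mp (Finset.mem_product.mp hx).1) x.2.1 x.2.2
      have h2 := PsiA_Phi hM hN x.1
        (Finset.mem_powersetCard_univ.mp (Finset.mem_product.mp hx).1) x.2.1 x.2.2
        (Phi_pure hM hN _ _ _ _) (Jset_card hM hN _ (Phi_pure hM hN _ _ _ _))
      have h3 := PsiB_Phi hM hN x.1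
        (Finset.mem_powersetCard_univ.mp (Finset.mem_product.mp hx).1) x.2.1 x.2.2
        (Phi_pure hM hN _ _ _ _)
        (card_compl_J hM hN _ (Jset_card hM hN _ (Phi_pure hM hN _ _ _ _)))
      exact Prod.ext h1 (Prod.ext h2 h3)
    · intro σ hσ
      conv_lhs => rw [← Phi_Psi hM hN σ ((Finset.mem_filter.mp hσ).2)
        (Jset_card hM hN σ (Finset.mem_filter.mp hσ).2)
        (card_compl_J hM hN _ (Jset_card hM hN σ (Finset.mem_filter.mp hσ).2))]
      exact Phi_term hM hN (Jset σ) (Jset_card hM hN σ (Finset.mem_filter.mp hσ).2) _ _ A B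
  rw [hbij, Finset.sum_product]
  have hinner : ∀ J ∈ (Finset.univ.powersetCard (M/2) :
      Finset (Finset (Fin ((M+N)/2)))),
      (∑ y ∈ ((Finset.univ ×ˢ Finset.univ) :
          Finset (Equiv.Perm (Fin M) × Equiv.Perm (Fin N))),
        (∏ k : Fin (M/2), A (y.1 (q0 k)) (y.1 (q1 k)))
          * (∏ k : Fin (N/2), B (y.2 (q0 k)) (y.2 (q1 k))))
      = rsum A * rsum B := by
    intro J _
    rw [Finset.sum_product, rsum, rsum, Finset.sum_mul_sum]
  rw [Finset.sum_congr rfl hinner, Finset.sum_const, Finset.card_powersetCard,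
    Finset.card_univ, Fintype.card_fin, nsmul_eq_mul]

lemma haf_dsum (A : Matrix (Fin M) (Fin M) ℝ) (B : Matrix (Fin N) (Fin N) ℝ) :
    haf (dsum A B) = haf A * haf B := by
  by_cases hM : 2 ∣ M <;> by_cases hN : 2 ∣ N
  · rw [haf_eq (by omega : 2 ∣ (M+N)), haf_eq hM, haf_eq hN, rsum_dsum_even hM hN]
    have h2 : (M+N)/2 = M/2 + N/2 := by omega
    have hnat : ((M+N)/2).choose (M/2) * ((M/2).factorial * 2^(M/2))
        * ((N/2).factorial * 2^(N/2)) = ((M+N)/2).factorial * 2^((M+N)/2) := by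
      have hfac := Nat.choose_mul_factorial_mul_factorial (Nat.le_add_right (M/2) (N/2))
      rw [h2, pow_add, Nat.add_sub_cancel_left] at *
      calc (M/2 + N/2).choose (M/2) * ((M/2).factorial * 2^(M/2))
            * ((N/2).factorial * 2^(N/2))
          = ((M/2 + N/2).choose (M/2) * (M/2).factorial * (N/2).factorial)
            * (2^(M/2) * 2^(N/2)) := by ring
        _ = (M/2 + N/2).factorial * (2^(M/2) * 2^(N/2)) := by rw [hfac]
    have hc1 : (((M/2).factorial * 2^(M/2) : ℕ) : ℝ) ≠ 0 := by
      exact_mod_cast Nat.mul_ne_zero (Nat.factorial_ne_zero _) (by positivity)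
    have hc2 : (((N/2).factorial * 2^(N/2) : ℕ) : ℝ) ≠ 0 := by
      exact_mod_cast Nat.mul_ne_zero (Nat.factorial_ne_zero _) (by positivity)
    have hcK : ((((M+N)/2).factorial * 2^((M+N)/2) : ℕ) : ℝ) ≠ 0 := by
      exact_mod_cast Nat.mul_ne_zero (Nat.factorial_ne_zero _) (by positivity)
    have hconst : ((((M+N)/2).factorial * 2^((M+N)/2) : ℕ) : ℝ)⁻¹
        * ((((M+N)/2).choose (M/2) : ℕ) : ℝ)
        = (((M/2).factorial * 2^(M/2) : ℕ) : ℝ)⁻¹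
          * (((N/2).factorial * 2^(N/2) : ℕ) : ℝ)⁻¹ := by
      rw [inv_mul_eq_div, div_eq_iff hcK, mul_comm ((((M/2).factorial * 2^(M/2) : ℕ) : ℝ))⁻¹]
      field_simp
      have hnat' : ((M+N)/2).choose (M/2) * ((N/2).factorial * 2^(N/2)
          * ((M/2).factorial * 2^(M/2))) = ((M+N)/2).factorial * 2^((M+N)/2) := by
        rw [← hnat]; ring
      exact_mod_cast (by rw [hnat'.symm]; ring : ((M+N)/2).choose (M/2) * ((N/2).factorial * 2^(N/2))
        * ((M/2).factorial * 2^(M/2)) = ((M+N)/2).factorial * 2^((M+N)/2))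
    linear_combination (rsum A * rsum B) * hconst
  · rw [haf_odd (by omega : ¬ 2 ∣ (M+N)), haf_odd hN, mul_zero]
  · rw [haf_odd (by omega : ¬ 2 ∣ (M+N)), haf_odd hM, zero_mul]
  · rw [haf_eq (by omega : 2 ∣ (M+N)), rsum_dsum_oddodd hM hN, mul_zero, haf_odd hM, zero_mul]

end Assemble

section Final

variable {M N : ℕ}

lemma card_sp1_le (S : Finset (Fin (M+N))) : (sp1 S).card ≤ M := by
  have := Finset.card_le_univ (sp1 S)
  simpa using this

lemma card_sp2_le (S : Finset (Fin (M+N))) : (sp2 S).card ≤ N := by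
  have := Finset.card_le_univ (sp2 S)
  simpa using this

lemma muPlus_dsum (A : Matrix (Fin M) (Fin M) ℝ) (B : Matrix (Fin N) (Fin N) ℝ) :
    muPlus (dsum A B) = muPlus A * muPlus B := by
  classical
  rw [muPlus, muPlus, muPlus, Finset.sum_mul_sum]
  rw [show (∑ S₁ : Finset (Fin M), ∑ S₂ : Finset (Fin N),
      (Polynomial.C (haf (subm A S₁)) * Polynomial.X ^ (M - S₁.card))
        * (Polynomial.C (haf (subm B S₂)) * Polynomial.X ^ (N - S₂.card)))
    = ∑ P ∈ (Finset.univ ×ˢ Finset.univ :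
        Finset (Finset (Fin M) × Finset (Fin N))),
      (Polynomial.C (haf (subm A P.1)) * Polynomial.X ^ (M - P.1.card))
        * (Polynomial.C (haf (subm B P.2)) * Polynomial.X ^ (N - P.2.card))
    from by rw [Finset.sum_product]]
  refine Finset.sum_bij' (fun S _ => (sp1 S, sp2 S)) (fun P _ => jn P.1 P.2)
    (fun S _ => by rw [Finset.mem_product]; exact ⟨Finset.mem_univ _, Finset.mem_univ _⟩)
    (fun P _ => Finset.mem_univ _)
    (fun S _ => jn_sp S)
    (fun P _ => Prod.ext (sp1_jn P.1 P.2) (sp2_jn P.1 P.2)) ?_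
  intro S _
  conv_lhs => rw [← jn_sp S]
  rw [subm_jn, haf_cast, haf_dsum, card_jn]
  have h1 := card_sp1_le S
  have h2 := card_sp2_le S
  rw [show M + N - ((sp1 S).card + (sp2 S).card)
      = (M - (sp1 S).card) + ((N - (sp2 S).card)) from by omega,
    pow_add, Polynomial.C_mul]
  ring

/-- The signless displaced GBS polynomial is multiplicative over disjoint unions. -/
theorem dgbs_disjoint_union_mul {M₁ M₂ : ℕ}
    (G₁ : SimpleGraph (Fin M₁)) (G₂ : SimpleGraph (Fin M₂))
    [DecidableRel G₁.Adj] [DecidableRel G₂.Adj] (x z : ℝ) :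
    (∑ S : Finset (Fin (M₁ + M₂)),
        (Polynomial.eval z (muPlus (subm (dsum (G₁.adjMatrix ℝ) (G₂.adjMatrix ℝ)) S))) ^ 2 *
          x ^ (M₁ + M₂ - S.card)) =
      (∑ S : Finset (Fin M₁),
          (Polynomial.eval z (muPlus (subm (G₁.adjMatrix ℝ) S))) ^ 2 * x ^ (M₁ - S.card)) *
        (∑ S : Finset (Fin M₂),
          (Polynomial.eval z (muPlus (subm (G₂.adjMatrix ℝ) S))) ^ 2 * x ^ (M₂ - S.card)) := by
  classical
  rw [Finset.sum_mul_sum]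
  rw [show (∑ S₁ : Finset (Fin M₁), ∑ S₂ : Finset (Fin M₂),
      ((Polynomial.eval z (muPlus (subm (G₁.adjMatrix ℝ) S₁))) ^ 2 * x ^ (M₁ - S₁.card))
        * ((Polynomial.eval z (muPlus (subm (G₂.adjMatrix ℝ) S₂))) ^ 2 * x ^ (M₂ - S₂.card)))
    = ∑ P ∈ (Finset.univ ×ˢ Finset.univ :
        Finset (Finset (Fin M₁) × Finset (Fin M₂))),
      ((Polynomial.eval z (muPlus (subm (G₁.adjMatrix ℝ) P.1))) ^ 2 * x ^ (M₁ - P.1.card))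
        * ((Polynomial.eval z (muPlus (subm (G₂.adjMatrix ℝ) P.2))) ^ 2 * x ^ (M₂ - P.2.card))
    from by rw [Finset.sum_product]]
  refine Finset.sum_bij' (fun S _ => (sp1 S, sp2 S)) (fun P _ => jn P.1 P.2)
    (fun S _ => by rw [Finset.mem_product]; exact ⟨Finset.mem_univ _, Finset.mem_univ _⟩)
    (fun P _ => Finset.mem_univ _)
    (fun S _ => jn_sp S)
    (fun P _ => Prod.ext (sp1_jn P.1 P.2) (sp2_jn P.1 P.2)) ?_
  intro S _
  conv_lhs => rw [← jn_sp S]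
  rw [subm_jn, muPlus_cast, muPlus_dsum, Polynomial.eval_mul, card_jn]
  have h1 := card_sp1_le S
  have h2 := card_sp2_le S
  rw [show M₁ + M₂ - ((sp1 S).card + (sp2 S).card)
      = (M₁ - (sp1 S).card) + ((M₂ - (sp2 S).card)) from by omega,
    pow_add]
  ring

end Final
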